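/- Let a, η, φ, b > 0 and T > 0. For an integer N ≥ b/a set a_N := a − b/(2N) (so a_N > 0). Let γ and γ^N be the unique solutions on [0,T] of the trader Riccati terminal-value problems with parameters (a, η, φ) and (a_N, η, φ) respectively. Define Γ_{s,t} := exp(∫_s^t (γ(r) − 2a)/(2η) dr), Γ^N_{s,t} := exp(∫_s^t (γ^N(r) − 2a_N)/(2η) dr), z(t) := ((γ(t) − 2a)/(2η))·Γ_{0,t} and z^N(t) := ((γ^N(t) − 2a_N)/(2η))·Γ^N_{0,t}. Then there exists a constant C, depending only on a, η, φ, b, T, such that for every integer N ≥ b/a: sup_{t∈[0,T]} |γ^N(t) − γ(t)| ≤ C/N, sup_{s,t∈[0,T]} |Γ^N_{s,t} − Γ_{s,t}| ≤ C/N, and sup_{t∈[0,T]} |z^N(t) − z(t)| ≤ C/N. -/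

import Mathlib

open Set

/-- The trader Riccati terminal-value problem with parameters `(α, η, φ)`. -/
def IsTraderRiccatiSol (α η φ T : ℝ) (γ : ℝ → ℝ) : Prop :=
  ContDiffOn ℝ 1 γ (Icc 0 T) ∧ γ T = 0 ∧
    ∀ t ∈ Icc (0 : ℝ) T,
      HasDerivWithinAt γ ((φ - α ^ 2 / η) + (2 * α / η) * γ t - (1 / (2 * η)) * (γ t) ^ 2)
        (Icc 0 T) t

/-- `Γ_{s,t} = exp(∫_s^t (γ(r) − 2α)/(2η) dr)`, with the signed-integral convention. -/
noncomputable def Gam (α η : ℝ) (γ : ℝ → ℝ) (s t : ℝ) : ℝ :=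
  Real.exp (∫ r in s..t, (γ r - 2 * α) / (2 * η))

/-- `z(t) = ((γ(t) − 2α)/(2η))·Γ_{0,t}`. -/
noncomputable def zfun (α η : ℝ) (γ : ℝ → ℝ) (t : ℝ) : ℝ :=
  ((γ t - 2 * α) / (2 * η)) * Gam α η γ 0 t


/-- value of the Riccati vector field -/
noncomputable def RicD (α η φ : ℝ) (y : ℝ) : ℝ :=
  (φ - α ^ 2 / η) + (2 * α / η) * y - (1 / (2 * η)) * y ^ 2

lemma refl_hasDeriv {T : ℝ} {γ : ℝ → ℝ} {D : ℝ → ℝ}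
    (hγ : ∀ t ∈ Icc (0:ℝ) T, HasDerivWithinAt γ (D t) (Icc 0 T) t)
    {s : ℝ} (hs : s ∈ Ico (0:ℝ) T) :
    HasDerivWithinAt (fun u => γ (T - u)) (-(D (T - s))) (Ici s) s := by
  have hmem : T - s ∈ Icc (0:ℝ) T := ⟨by linarith [hs.2], by linarith [hs.1]⟩
  have h1 : HasDerivAt (fun u : ℝ => T - u) (-1) s := by
    simpa using (hasDerivAt_id s).const_sub T
  have h2 := HasDerivWithinAt.comp s (hγ _ hmem) h1.hasDerivWithinAt
    (fun u (hu : u ∈ Icc (0:ℝ) T) => ⟨by linarith [hu.2], by linarith [hu.1]⟩)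
  have h3 : HasDerivWithinAt (fun u => γ (T - u)) (-(D (T - s))) (Icc 0 T) s := by
    rw [show -(D (T - s)) = D (T - s) * (-1) by ring]; exact h2
  exact h3.mono_of_mem_nhdsWithin (mem_nhdsWithin.2 ⟨Iio T, isOpen_Iio, hs.2,
    fun x hx => ⟨le_trans hs.1 hx.2, le_of_lt hx.1⟩⟩)

lemma riccati_mem_Icc {a η φ T α : ℝ} (hη : 0 < η) (hφ : 0 < φ) (hT : 0 < T)
    (hα : 0 < α) (hαa : α ≤ a) {γ : ℝ → ℝ}
    (h : IsTraderRiccatiSol α η φ T γ) :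
    ∀ t ∈ Icc (0:ℝ) T, γ t ∈ Icc (-(Real.sqrt (2*η*φ + 2*α^2))) (2*α) := by
  obtain ⟨hsm, hterm, hderiv⟩ := h
  set K := Real.sqrt (2*η*φ + 2*α^2) with hK
  have hKsq : K^2 = 2*η*φ + 2*α^2 := Real.sq_sqrt (by positivity)
  have hK0 : 0 ≤ K := Real.sqrt_nonneg _
  have hcγ : ContinuousOn γ (Icc 0 T) := hsm.continuousOn
  have hrefl : ContinuousOn (fun u => γ (T - u)) (Icc (0:ℝ) T) := by
    apply hcγ.comp (Continuous.continuousOn (by continuity))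
    exact fun u hu => ⟨by linarith [hu.2], by linarith [hu.1]⟩
  have hd : ∀ t ∈ Icc (0:ℝ) T, HasDerivWithinAt γ (RicD α η φ (γ t)) (Icc 0 T) t := by
    intro t ht; exact hderiv t ht
  -- upper bound
  have hup : ∀ x ∈ Icc (0:ℝ) T, γ (T - x) ≤ 2*α := by
    intro x hx
    refine image_le_of_deriv_right_lt_deriv_boundary (f' := fun s => -(RicD α η φ (γ (T - s))))
      hrefl (fun s hs => refl_hasDeriv hd hs) (by simpa [hterm] using le_of_lt (by linarith : (0:ℝ) < 2*α))
      (B := fun _ => 2*α) (B' := fun _ => 0) (fun x => hasDerivAt_const x _) ?_ hx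
    intro s hs heq
    show -RicD α η φ (γ (T - s)) < 0
    have heq' : γ (T - s) = 2*α := heq
    have : RicD α η φ (γ (T - s)) = φ + α^2/η := by
      rw [heq', RicD]; field_simp; ring
    rw [this]; have : 0 < φ + α^2/η := by positivity
    linarith
  -- lower bound
  have hlow : ∀ x ∈ Icc (0:ℝ) T, -(γ (T - x)) ≤ K := by
    intro x hx
    refine image_le_of_deriv_right_lt_deriv_boundary (f' := fun s => (RicD α η φ (γ (T - s))))
      hrefl.neg (fun s hs => by simpa using (refl_hasDeriv hd hs).neg)
      (by simpa [hterm]) (B := fun _ => K) (B' := fun _ => 0)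
      (fun x => hasDerivAt_const x _) ?_ hx
    intro s hs heq
    show RicD α η φ (γ (T - s)) < 0
    have heq' : -γ (T - s) = K := heq
    have hval : γ (T - s) = -K := by linarith
    have : RicD α η φ (γ (T - s)) = -(2*α^2 + 2*α*K)/η := by
      rw [hval, RicD]; field_simp; linear_combination (-1:ℝ) * hKsq
    rw [this, neg_div]
    have h1 : 0 < 2*α^2 + 2*α*K := by nlinarith
    have : (0:ℝ) < (2*α^2 + 2*α*K)/η := by positivity
    linarith
  intro t ht
  have htx : T - t ∈ Icc (0:ℝ) T := ⟨by linarith [ht.2], by linarith [ht.1]⟩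
  have h1 := hup (T - t) htx
  have h2 := hlow (T - t) htx
  simp only [sub_sub_cancel] at h1 h2
  exact ⟨by linarith, h1⟩

noncomputable def MM (a η φ : ℝ) : ℝ := 2*a + Real.sqrt (2*η*φ + 2*a^2)

lemma MM_nonneg {a η φ : ℝ} (ha : 0 < a) : 0 ≤ MM a η φ := by
  have := Real.sqrt_nonneg (2*η*φ + 2*a^2); unfold MM; linarith

lemma riccati_abs_le {a η φ T α : ℝ} (hη : 0 < η) (hφ : 0 < φ) (hT : 0 < T)
    (hα : 0 < α) (hαa : α ≤ a) {γ : ℝ → ℝ}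
    (h : IsTraderRiccatiSol α η φ T γ) :
    ∀ t ∈ Icc (0:ℝ) T, |γ t| ≤ MM a η φ := by
  intro t ht
  obtain ⟨h1, h2⟩ := riccati_mem_Icc hη hφ hT hα hαa h t ht
  have hs : Real.sqrt (2*η*φ + 2*α^2) ≤ Real.sqrt (2*η*φ + 2*a^2) :=
    Real.sqrt_le_sqrt (by nlinarith)
  have hs0 : 0 ≤ Real.sqrt (2*η*φ + 2*a^2) := Real.sqrt_nonneg _
  rw [abs_le]; unfold MM; constructor <;> linarith

lemma riccati_diff {a η φ T α α' : ℝ} (ha : 0 < a) (hη : 0 < η) (hφ : 0 < φ) (hT : 0 < T)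
    (hα : 0 < α) (hαa : α ≤ a) (hα' : 0 < α') (hα'a : α' ≤ a)
    {γ γ' : ℝ → ℝ} (h1 : IsTraderRiccatiSol α η φ T γ) (h2 : IsTraderRiccatiSol α' η φ T γ') :
    ∀ t ∈ Icc (0:ℝ) T, |γ' t - γ t| ≤
      |α' - α| * ((2*a+2*MM a η φ)/η * (T * Real.exp ((2*a+MM a η φ)/η * T))) := by
  set M := MM a η φ with hM
  have hM0 : 0 ≤ M := MM_nonneg ha
  set L := (2*a+M)/η with hL
  have hL0 : 0 < L := by positivity
  set ε := |α' - α| * ((2*a+2*M)/η) with hε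
  have hε0 : 0 ≤ ε := by positivity
  have hd1 : ∀ t ∈ Icc (0:ℝ) T, HasDerivWithinAt γ (RicD α η φ (γ t)) (Icc 0 T) t :=
    fun t ht => h1.2.2 t ht
  have hd2 : ∀ t ∈ Icc (0:ℝ) T, HasDerivWithinAt γ' (RicD α' η φ (γ' t)) (Icc 0 T) t :=
    fun t ht => h2.2.2 t ht
  have hb1 := riccati_abs_le hη hφ hT hα hαa h1
  have hb2 := riccati_abs_le hη hφ hT hα' hα'a h2
  set f : ℝ → ℝ := fun s => γ' (T - s) - γ (T - s) with hf
  have hmaps : ∀ u ∈ Icc (0:ℝ) T, T - u ∈ Icc (0:ℝ) T :=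
    fun u hu => ⟨by linarith [hu.2], by linarith [hu.1]⟩
  have hcont : ContinuousOn f (Icc 0 T) := by
    apply ContinuousOn.sub
    · exact (h2.1.continuousOn).comp (Continuous.continuousOn (by continuity)) hmaps
    · exact (h1.1.continuousOn).comp (Continuous.continuousOn (by continuity)) hmaps
  set f' : ℝ → ℝ := fun s => -(RicD α' η φ (γ' (T - s))) - (-(RicD α η φ (γ (T - s)))) with hf'
  have hderivf : ∀ x ∈ Ico (0:ℝ) T, HasDerivWithinAt f (f' x) (Ici x) x :=
    fun x hx => (refl_hasDeriv hd2 hx).sub (refl_hasDeriv hd1 hx)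
  have hbound : ∀ x ∈ Ico (0:ℝ) T, ‖f' x‖ ≤ L * ‖f x‖ + ε := by
    intro x hx
    have hxmem : T - x ∈ Icc (0:ℝ) T := hmaps x ⟨hx.1, le_of_lt hx.2⟩
    set u := γ (T - x) with hu
    set u' := γ' (T - x) with hu'
    have hbu : |u| ≤ M := hb1 _ hxmem
    have hbu' : |u'| ≤ M := hb2 _ hxmem
    have hid : RicD α' η φ u' - RicD α η φ u =
        (α' - α) * ((2*u - α - α')/η) + (u' - u) * ((2*α' - (u'+u)/2)/η) := by
      unfold RicD; field_simp; ring
    have e1 : ‖f' x‖ = |RicD α' η φ u' - RicD α η φ u| := by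
      rw [hf']; simp only [Real.norm_eq_abs]
      rw [show -(RicD α' η φ (γ' (T - x))) - (-(RicD α η φ (γ (T - x)))) =
        -(RicD α' η φ u' - RicD α η φ u) by ring, abs_neg]
    have e2 : ‖f x‖ = |u' - u| := by rw [hf]; simp [Real.norm_eq_abs]; rfl
    rw [e1, e2, hid]
    have hd1' := abs_le.1 hbu
    have hd2' := abs_le.1 hbu'
    have habs1 : |(2*u - α - α')/η| ≤ (2*M+2*a)/η := by
      rw [abs_div, abs_of_pos hη]; gcongr
      rw [abs_le]; constructor <;> linarith
    have habs2 : |(2*α' - (u'+u)/2)/η| ≤ L := by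
      rw [hL, abs_div, abs_of_pos hη]; gcongr
      rw [abs_le]; constructor <;> linarith
    calc |(α' - α) * ((2*u - α - α')/η) + (u' - u) * ((2*α' - (u'+u)/2)/η)|
        ≤ |α' - α| * |(2*u - α - α')/η| + |u' - u| * |(2*α' - (u'+u)/2)/η| := by
          refine (abs_add_le _ _).trans ?_; rw [abs_mul, abs_mul]
      _ ≤ |α' - α| * ((2*M+2*a)/η) + |u' - u| * L := by gcongr
      _ = L * |u' - u| + ε := by rw [hε]; ring
  have hstart : ‖f 0‖ ≤ 0 := by simp [hf, h1.2.1, h2.2.1]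
  have hgron := norm_le_gronwallBound_of_norm_deriv_right_le hcont hderivf hstart hbound
  intro t ht
  have hx : T - t ∈ Icc (0:ℝ) T := hmaps t ht
  have hkey := hgron (T - t) hx
  have hnorm : ‖f (T - t)‖ = |γ' t - γ t| := by
    simp [hf, sub_sub_cancel, Real.norm_eq_abs]
  rw [hnorm] at hkey
  refine hkey.trans ?_
  rw [gronwallBound_of_K_ne_0 hL0.ne']
  have hxT : L * (T - t - 0) ≤ L * T := by
    have := ht.1; nlinarith
  have hexp_le : Real.exp (L * (T - t - 0)) ≤ Real.exp (L*T) := Real.exp_le_exp.2 hxT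
  have hmul : Real.exp (-(L*T)) * Real.exp (L*T) = 1 := by
    rw [← Real.exp_add]; simp
  have hkey2 : Real.exp (L*T) - 1 ≤ L*T*Real.exp (L*T) := by
    nlinarith [mul_le_mul_of_nonneg_right (Real.add_one_le_exp (-(L*T)))
      (le_of_lt (Real.exp_pos (L*T))), hmul]
  have h3 : ε / L * (Real.exp (L * (T - t - 0)) - 1) ≤ ε / L * (L*T*Real.exp (L*T)) := by
    have : (0:ℝ) ≤ ε / L := by positivity
    apply mul_le_mul_of_nonneg_left _ this
    linarith
  calc (0:ℝ) * Real.exp (L * (T - t - 0)) + ε / L * (Real.exp (L * (T - t - 0)) - 1)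
      ≤ ε / L * (L*T*Real.exp (L*T)) := by rw [zero_mul, zero_add]; exact h3
    _ = |α' - α| * ((2*a+2*M)/η * (T * Real.exp ((2*a+M)/η * T))) := by
        rw [hε, hL]; field_simp

lemma abs_exp_sub_one_le' (z : ℝ) : |Real.exp z - 1| ≤ |z| * Real.exp |z| := by
  rcases le_or_gt 0 z with h | h
  · rw [abs_of_nonneg h,
      abs_of_nonneg (by linarith [Real.one_le_exp h] : (0:ℝ) ≤ Real.exp z - 1)]
    have hmul : Real.exp (-z) * Real.exp z = 1 := by rw [← Real.exp_add]; simp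
    nlinarith [mul_le_mul_of_nonneg_right (Real.add_one_le_exp (-z))
      (le_of_lt (Real.exp_pos z))]
  · have hz1 : Real.exp z ≤ 1 := by
      rw [show (1:ℝ) = Real.exp 0 by simp]; exact Real.exp_le_exp.2 h.le
    rw [abs_of_neg h, abs_of_nonpos (by linarith : Real.exp z - 1 ≤ 0)]
    nlinarith [Real.add_one_le_exp z, Real.one_le_exp (neg_nonneg.2 h.le)]

lemma abs_exp_sub_exp {x y B : ℝ} (hx : |x| ≤ B) (hy : |y| ≤ B) :
    |Real.exp x - Real.exp y| ≤ Real.exp (3*B) * |x - y| := by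
  have hB0 : 0 ≤ B := le_trans (abs_nonneg x) hx
  have h1 : Real.exp x - Real.exp y = Real.exp y * (Real.exp (x - y) - 1) := by
    rw [mul_sub, ← Real.exp_add]; ring_nf
  have hxy : |x - y| ≤ 2*B := by
    have := abs_sub_abs_le_abs_sub x y
    calc |x - y| ≤ |x| + |y| := abs_sub _ _
      _ ≤ 2*B := by linarith
  rw [h1, abs_mul, abs_of_pos (Real.exp_pos y)]
  calc Real.exp y * |Real.exp (x-y) - 1|
      ≤ Real.exp B * (|x-y| * Real.exp |x-y|) :=
        mul_le_mul (Real.exp_le_exp.2 (le_of_abs_le hy)) (abs_exp_sub_one_le' _)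
          (abs_nonneg _) (Real.exp_pos B).le
    _ ≤ Real.exp B * (|x-y| * Real.exp (2*B)) := by
        gcongr
    _ = Real.exp (3*B) * |x-y| := by rw [show (3:ℝ)*B = B + 2*B by ring, Real.exp_add]; ring

lemma int_abs_le {T η P : ℝ} (hη : 0 < η) {g : ℝ → ℝ} (hgc : ContinuousOn g (Icc 0 T))
    (hg : ∀ r ∈ Icc (0:ℝ) T, |g r| ≤ P) {s t : ℝ} (hs : s ∈ Icc (0:ℝ) T)
    (ht : t ∈ Icc (0:ℝ) T) :
    |∫ r in s..t, g r / (2*η)| ≤ T * P / (2*η) := by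
  have hsub : uIcc s t ⊆ Icc 0 T := uIcc_subset_Icc hs ht
  have hP0 : 0 ≤ P := le_trans (abs_nonneg _) (hg s hs)
  have h := intervalIntegral.norm_integral_le_of_norm_le_const (C := P/(2*η)) (a := s) (b := t)
    (f := fun r => g r/(2*η)) (fun r hr => by
      rw [Real.norm_eq_abs, abs_div, abs_of_pos (by positivity : (0:ℝ)<2*η)]
      gcongr
      exact hg r (hsub (uIoc_subset_uIcc hr)))
  rw [Real.norm_eq_abs] at h
  refine h.trans ?_
  have htsT : |t - s| ≤ T := abs_le.2
    ⟨by linarith [hs.2, ht.1], by linarith [ht.2, hs.1]⟩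
  calc P/(2*η) * |t-s| ≤ P/(2*η) * T :=
        mul_le_mul_of_nonneg_left htsT (div_nonneg hP0 (by positivity))
    _ = T*P/(2*η) := by ring

theorem riccati_N_trader_approximation
    (a η φ b T : ℝ) (ha : 0 < a) (hη : 0 < η) (hφ : 0 < φ) (hb : 0 < b) (hT : 0 < T) :
    ∃ C : ℝ, ∀ N : ℕ, b / a ≤ (N : ℝ) →
      ∀ γ γN : ℝ → ℝ,
        IsTraderRiccatiSol a η φ T γ →
        IsTraderRiccatiSol (a - b / (2 * N)) η φ T γN →
        (∀ t ∈ Icc (0 : ℝ) T, |γN t - γ t| ≤ C / N) ∧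
        (∀ s ∈ Icc (0 : ℝ) T, ∀ t ∈ Icc (0 : ℝ) T,
          |Gam (a - b / (2 * N)) η γN s t - Gam a η γ s t| ≤ C / N) ∧
        (∀ t ∈ Icc (0 : ℝ) T,
          |zfun (a - b / (2 * N)) η γN t - zfun a η γ t| ≤ C / N) := by
  have hM0 : 0 ≤ MM a η φ := MM_nonneg ha
  set M := MM a η φ with hM
  set Cg := (2*a+2*M)/η * (T * Real.exp ((2*a+M)/η * T)) with hCg
  have hCg0 : 0 ≤ Cg := by rw [hCg]; positivity
  set C1 := (b/2) * Cg with hC1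
  have hC10 : 0 ≤ C1 := by rw [hC1]; positivity
  set B0 := T*(M+2*a)/(2*η) with hB0
  have hB00 : 0 ≤ B0 := by rw [hB0]; positivity
  set DI := T*((C1+b)/(2*η)) with hDI
  have hDI0 : 0 ≤ DI := by rw [hDI]; positivity
  set C2 := Real.exp (3*B0) * DI with hC2
  have hC20 : 0 ≤ C2 := by rw [hC2]; positivity
  set C3 := (C1+b)/(2*η) * Real.exp B0 + ((M+2*a)/(2*η)) * C2 with hC3
  have hC30 : 0 ≤ C3 := by rw [hC3]; positivity
  refine ⟨max C1 (max C2 C3), ?_⟩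
  intro N hN γ γN hγ hγN
  have hN0 : (0:ℝ) < N := lt_of_lt_of_le (div_pos hb ha) hN
  set αN := a - b/(2*(N:ℝ)) with hαN
  have hba : b ≤ N * a := (div_le_iff₀ ha).1 hN
  have hhalf : b/(2*(N:ℝ)) ≤ a/2 := by
    rw [div_le_div_iff₀ (by positivity) two_pos]; nlinarith
  have hαN0 : 0 < αN := by rw [hαN]; linarith
  have hαNa : αN ≤ a := by
    have : 0 ≤ b/(2*(N:ℝ)) := by positivity
    rw [hαN]; linarith
  have habs : |αN - a| = b/(2*(N:ℝ)) := by
    rw [hαN, show a - b/(2*(N:ℝ)) - a = -(b/(2*(N:ℝ))) by ring, abs_neg,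
      abs_of_nonneg (by positivity)]
  -- Part 1 : sup bound on γN - γ
  have hdiff := riccati_diff ha hη hφ hT ha le_rfl hαN0 hαNa hγ hγN
  have hpart1 : ∀ t ∈ Icc (0:ℝ) T, |γN t - γ t| ≤ C1 / N := by
    intro t ht
    have h := hdiff t ht
    rw [habs, ← hM, ← hCg] at h
    refine h.trans_eq ?_
    rw [hC1]; field_simp
  -- bounds on solutions
  have hbγ := riccati_abs_le hη hφ hT ha le_rfl hγ
  have hbγN := riccati_abs_le hη hφ hT hαN0 hαNa hγN
  rw [← hM] at hbγ hbγN
  -- pointwise bound on integrand difference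
  have hqdiff : ∀ t ∈ Icc (0:ℝ) T,
      |(γN t - 2*αN)/(2*η) - (γ t - 2*a)/(2*η)| ≤ ((C1+b)/(2*η))/N := by
    intro t ht
    have h1 := hpart1 t ht
    have h2 : 2*a - 2*αN = b/N := by rw [hαN]; field_simp; ring
    have hX : |(γN t - γ t) + (2*a - 2*αN)| ≤ (C1+b)/N := by
      calc |(γN t - γ t) + (2*a - 2*αN)| ≤ |γN t - γ t| + |2*a - 2*αN| := abs_add_le _ _
        _ ≤ C1/N + b/N := by
            rw [h2, abs_of_nonneg (by positivity : (0:ℝ) ≤ b/N)]; linarith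
        _ = (C1+b)/N := by ring
    calc |(γN t - 2*αN)/(2*η) - (γ t - 2*a)/(2*η)|
        = |(γN t - γ t) + (2*a - 2*αN)|/(2*η) := by
          rw [show (γN t - 2*αN)/(2*η) - (γ t - 2*a)/(2*η)
            = ((γN t - γ t) + (2*a - 2*αN))/(2*η) by ring, abs_div,
            abs_of_pos (by positivity : (0:ℝ) < 2*η)]
      _ ≤ ((C1+b)/N)/(2*η) := by gcongr
      _ = ((C1+b)/(2*η))/N := by ring
  -- integrand continuity and bounds
  have hcγ : ContinuousOn (fun r => γ r - 2*a) (Icc (0:ℝ) T) :=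
    hγ.1.continuousOn.sub continuousOn_const
  have hcγN : ContinuousOn (fun r => γN r - 2*αN) (Icc (0:ℝ) T) :=
    hγN.1.continuousOn.sub continuousOn_const
  have hbint : ∀ r ∈ Icc (0:ℝ) T, |γ r - 2*a| ≤ M + 2*a := by
    intro r hr
    have := abs_le.1 (hbγ r hr)
    rw [abs_le]; constructor <;> linarith
  have hbintN : ∀ r ∈ Icc (0:ℝ) T, |γN r - 2*αN| ≤ M + 2*a := by
    intro r hr
    have := abs_le.1 (hbγN r hr)
    rw [abs_le]; constructor <;> linarith
  -- exponent bounds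
  have hexpb : ∀ s ∈ Icc (0:ℝ) T, ∀ t ∈ Icc (0:ℝ) T,
      |∫ r in s..t, (γ r - 2*a)/(2*η)| ≤ B0 := by
    intro s hs t ht
    have := int_abs_le hη hcγ hbint hs ht
    rwa [← hB0] at this
  have hexpbN : ∀ s ∈ Icc (0:ℝ) T, ∀ t ∈ Icc (0:ℝ) T,
      |∫ r in s..t, (γN r - 2*αN)/(2*η)| ≤ B0 := by
    intro s hs t ht
    have := int_abs_le hη hcγN hbintN hs ht
    rwa [← hB0] at this
  -- Part 2 : Gam bound
  have hpart2 : ∀ s ∈ Icc (0:ℝ) T, ∀ t ∈ Icc (0:ℝ) T,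
      |Gam αN η γN s t - Gam a η γ s t| ≤ C2 / N := by
    intro s hs t ht
    have hsub : uIcc s t ⊆ Icc 0 T := uIcc_subset_Icc hs ht
    have hint1 : IntervalIntegrable (fun r => (γ r - 2*a)/(2*η)) MeasureTheory.volume s t :=
      ((hcγ.mono hsub).div_const _).intervalIntegrable
    have hint2 : IntervalIntegrable (fun r => (γN r - 2*αN)/(2*η)) MeasureTheory.volume s t :=
      ((hcγN.mono hsub).div_const _).intervalIntegrable
    have hIdiff : |(∫ r in s..t, (γN r - 2*αN)/(2*η)) - ∫ r in s..t, (γ r - 2*a)/(2*η)|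
        ≤ DI / N := by
      rw [← intervalIntegral.integral_sub hint2 hint1]
      have h := intervalIntegral.norm_integral_le_of_norm_le_const
        (C := ((C1+b)/(2*η))/N) (a := s) (b := t)
        (f := fun r => (γN r - 2*αN)/(2*η) - (γ r - 2*a)/(2*η))
        (fun r hr => by
          rw [Real.norm_eq_abs]
          exact hqdiff r (hsub (uIoc_subset_uIcc hr)))
      rw [Real.norm_eq_abs] at h
      refine h.trans ?_
      have htsT : |t - s| ≤ T := abs_le.2
        ⟨by linarith [hs.2, ht.1], by linarith [ht.2, hs.1]⟩
      calc ((C1+b)/(2*η))/N * |t - s| ≤ ((C1+b)/(2*η))/N * T := by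
            have h0 : (0:ℝ) ≤ ((C1+b)/(2*η))/N := by positivity
            exact mul_le_mul_of_nonneg_left htsT h0
        _ = DI / N := by rw [hDI]; ring
    calc |Gam αN η γN s t - Gam a η γ s t|
        ≤ Real.exp (3*B0) * |(∫ r in s..t, (γN r - 2*αN)/(2*η))
            - ∫ r in s..t, (γ r - 2*a)/(2*η)| :=
          abs_exp_sub_exp (hexpbN s hs t ht) (hexpb s hs t ht)
      _ ≤ Real.exp (3*B0) * (DI / N) := by gcongr
      _ = C2 / N := by rw [hC2]; ring
  -- Part 3 : zfun bound
  have h0T : (0:ℝ) ∈ Icc (0:ℝ) T := ⟨le_rfl, hT.le⟩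
  have hpart3 : ∀ t ∈ Icc (0:ℝ) T, |zfun αN η γN t - zfun a η γ t| ≤ C3 / N := by
    intro t ht
    have hq : |(γ t - 2*a)/(2*η)| ≤ (M+2*a)/(2*η) := by
      rw [abs_div, abs_of_pos (by positivity : (0:ℝ) < 2*η)]
      gcongr
      exact hbint t ht
    have hΓN : |Gam αN η γN 0 t| ≤ Real.exp B0 := by
      rw [Gam, abs_of_pos (Real.exp_pos _)]
      exact Real.exp_le_exp.2 (le_of_abs_le (hexpbN 0 h0T t ht))
    have hqd := hqdiff t ht
    have hΓd := hpart2 0 h0T t ht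
    calc |zfun αN η γN t - zfun a η γ t|
        = |((γN t - 2*αN)/(2*η) - (γ t - 2*a)/(2*η)) * Gam αN η γN 0 t
            + (γ t - 2*a)/(2*η) * (Gam αN η γN 0 t - Gam a η γ 0 t)| := by
          rw [zfun, zfun]; ring_nf
      _ ≤ |(γN t - 2*αN)/(2*η) - (γ t - 2*a)/(2*η)| * |Gam αN η γN 0 t|
            + |(γ t - 2*a)/(2*η)| * |Gam αN η γN 0 t - Gam a η γ 0 t| := by
          refine (abs_add_le _ _).trans ?_
          rw [abs_mul, abs_mul]
      _ ≤ ((C1+b)/(2*η))/N * Real.exp B0 + (M+2*a)/(2*η) * (C2/N) := by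
          refine add_le_add (mul_le_mul hqd hΓN (abs_nonneg _) (by positivity))
            (mul_le_mul hq hΓd (abs_nonneg _) (by positivity))
      _ = C3 / N := by rw [hC3]; ring
  refine ⟨?_, ?_, ?_⟩
  · intro t ht
    refine (hpart1 t ht).trans ?_
    gcongr
    exact le_max_left _ _
  · intro s hs t ht
    refine (hpart2 s hs t ht).trans ?_
    gcongr
    exact le_trans (le_max_left _ _) (le_max_right _ _)
  · intro t ht
    refine (hpart3 t ht).trans ?_
    gcongr
    exact le_trans (le_max_right _ _) (le_max_right _ _)
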